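/- Let k ≥ 1 be odd, let a : ℕ → ℂ be a k-periodic sequence whose monodromy matrix C_k has trace 0. Then C_k² is the identity matrix, and consequently every solution x : ℕ → ℂ of x_{n+2} = a_n x_{n+1} + x_n is 2k-periodic: x_{n+2k} = x_n for all n ≥ 0. -/

import Mathlib

/-- The `i`-th Fibonacci matrix. -/
def fibMat (a : ℕ → ℂ) (i : ℕ) : Matrix (Fin 2) (Fin 2) ℂ :=
  !![a i, 1; 1, 0]

/-- The product `C n = A_{n-1} ⋯ A_1 A_0` of Fibonacci matrices. -/
noncomputable def fibProd (a : ℕ → ℂ) : ℕ → Matrix (Fin 2) (Fin 2) ℂ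
  | 0 => 1
  | n + 1 => fibMat a n * fibProd a n

/-!
By Cayley–Hamilton `C² = tr C • C - det C • 1`, and `det C = (-1)^k = -1` since every Fibonacci
matrix has determinant `-1`; so `tr C = 0` forces `C² = 1`. Periodicity of `a` makes the
monodromy over two periods equal to `C² = 1`, and since `(x (n+1), x n) = C_n (x 1, x 0)`,
every solution repeats after `2k` steps.
-/

open Matrix Function

theorem Matrix.sq_fin_two_eq_trace_smul_sub_det_smul {R : Type*} [CommRing R]
    (M : Matrix (Fin 2) (Fin 2) R) :
    M ^ 2 = M.trace • M - M.det • (1 : Matrix (Fin 2) (Fin 2) R) := by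
  ext i j
  fin_cases i <;> fin_cases j <;>
    simp [sq, mul_apply, trace_fin_two, det_fin_two] <;> ring

theorem det_fibMat (a : ℕ → ℂ) (i : ℕ) : (fibMat a i).det = -1 := by
  simp [fibMat, det_fin_two_of]

theorem det_fibProd (a : ℕ → ℂ) (n : ℕ) : (fibProd a n).det = (-1) ^ n := by
  induction n with
  | zero => simp [fibProd]
  | succ n ih => rw [fibProd, det_mul, ih, det_fibMat, pow_succ']

theorem fibProd_add (a : ℕ → ℂ) (m n : ℕ) :
    fibProd a (m + n) = fibProd (fun i => a (i + n)) m * fibProd a n := by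
  induction m with
  | zero => simp [fibProd]
  | succ m ih => rw [Nat.add_right_comm, fibProd, ih, fibProd, Matrix.mul_assoc]; rfl

theorem Function.Periodic.fibProd_add {a : ℕ → ℂ} {p : ℕ} (ha : Periodic a p) (m : ℕ) :
    fibProd a (m + p) = fibProd a m * fibProd a p := by
  rw [_root_.fibProd_add, ha.funext]

theorem Function.Periodic.fibProd_mul {a : ℕ → ℂ} {p : ℕ} (ha : Periodic a p) (m : ℕ) :
    fibProd a (m * p) = fibProd a p ^ m := by
  induction m with
  | zero => simp [fibProd]
  | succ m ih => rw [Nat.succ_mul, ha.fibProd_add, ih, pow_succ]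

theorem fibProd_mulVec {a x : ℕ → ℂ} (hx : ∀ n, x (n + 2) = a n * x (n + 1) + x n) (n : ℕ) :
    fibProd a n *ᵥ ![x 1, x 0] = ![x (n + 1), x n] := by
  induction n with
  | zero => simp [fibProd]
  | succ n ih =>
    rw [fibProd, ← mulVec_mulVec, ih, hx]
    ext i
    fin_cases i <;> simp [fibMat, mulVec, dotProduct_cons]

theorem Function.Periodic.of_fibProd_eq_one {a x : ℕ → ℂ} {p : ℕ} (ha : Periodic a p)
    (hp : fibProd a p = 1) (hx : ∀ n, x (n + 2) = a n * x (n + 1) + x n) : Periodic x p := by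
  intro n
  have h := fibProd_mulVec hx (n + p)
  rw [ha.fibProd_add, hp, Matrix.mul_one, fibProd_mulVec hx] at h
  simpa using (congrFun h 1).symm

theorem odd_period_trace_zero_general (k : ℕ) (hodd : Odd k)
    (a : ℕ → ℂ) (ha : ∀ n, a (n + k) = a n)
    (htr : (fibProd a k).trace = 0) :
    fibProd a k ^ 2 = 1 ∧
    ∀ x : ℕ → ℂ, (∀ n, x (n + 2) = a n * x (n + 1) + x n) →
      ∀ n, x (n + 2 * k) = x n := by
  have hdet : (fibProd a k).det = -1 := by rw [det_fibProd, hodd.neg_one_pow]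
  have hsq : fibProd a k ^ 2 = 1 := by
    rw [sq_fin_two_eq_trace_smul_sub_det_smul, htr, hdet]
    simp
  have ha2 : Periodic a (2 * k) := Periodic.nat_mul ha 2
  refine ⟨hsq, fun x hx => ha2.of_fibProd_eq_one ?_ hx⟩
  rw [Periodic.fibProd_mul ha, hsq]

theorem odd_period_trace_zero (k : ℕ) (hk : 1 ≤ k) (hodd : Odd k)
    (a : ℕ → ℂ) (ha : ∀ n, a (n + k) = a n)
    (htr : (fibProd a k).trace = 0) :
    fibProd a k ^ 2 = 1 ∧
    ∀ x : ℕ → ℂ, (∀ n, x (n + 2) = a n * x (n + 1) + x n) →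
      ∀ n, x (n + 2 * k) = x n :=
  odd_period_trace_zero_general k hodd a ha htr
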